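/- The function Ψ_κ(n) = Σ_{k=0}^n ((-κ)^k / k!) Σ_{s=0}^k C(k,s) C(n,s) (H_{n-s} + H_{k-s} - 2H_s), where H_m = Σ_{j=1}^m 1/j are the harmonic numbers (H_0 = 0), satisfies the recurrence -(n+1)(Ψ_κ(n+1) - Ψ_κ(n)) + n(Ψ_κ(n) - Ψ_κ(n-1)) = κ Ψ_κ(n) for all n ≥ 1, with Ψ_κ(0) = 0 and Ψ_κ(1) = 1. -/

import Mathlib

/-!
Write `Ψ_κ(n) = Σ_{k ≤ n} (-κ)^k/k! · T(n,k)` with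
`T(n,k) = Σ_s C(k,s) C(n,s) (H_{n-s} + H_{k-s} - 2 H_s)`. Since
`κ (-κ)^k/k! = -(k+1) (-κ)^{k+1}/(k+1)!`, the recurrence for `Ψ_κ` reduces to the identity
`(n+1) T(n+1,k) - (2n+1) T(n,k) + n T(n-1,k) - k T(n,k-1) = [k = n]` for `k ≤ n`, where the
right-hand side compensates for the sum defining `Ψ_κ(n-1)` stopping at `k = n-1`.
That identity is proved summand by summand: the left-hand side applied to the `s`-th summand is
`G(s+1) - G(s)` (plus `1` at `s = n`) for an explicit certificate `G`, so the sum telescopes.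
Finally `T` is symmetric and vanishes on the diagonal, so the identity at `k = n` gives
`(m+1) T(m+1,m) = 1`, which yields both `n T(n-1,n) = 1` and `Ψ_κ(1) = 1`.
-/

open Finset

/-- The `m`-th harmonic number `H_m = Σ_{j=1}^m 1/j`, with `H_0 = 0`. -/
noncomputable def harm (m : ℕ) : ℝ := ∑ j ∈ range m, (1 : ℝ) / (j + 1)

/-- The second solution
`Ψ_κ(n) = Σ_{k=0}^n ((-κ)^k/k!) Σ_{s=0}^k C(k,s)C(n,s)(H_{n-s}+H_{k-s}-2H_s)`. -/
noncomputable def Psi (κ : ℂ) (n : ℕ) : ℂ :=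
  ∑ k ∈ range (n + 1), (-κ) ^ k / (k.factorial : ℂ) *
    ∑ s ∈ range (k + 1), (k.choose s : ℂ) * (n.choose s : ℂ) *
      ((harm (n - s) : ℝ) + (harm (k - s) : ℝ) - 2 * (harm s : ℝ) : ℝ)

open scoped Nat

theorem harm_zero : harm 0 = 0 := by simp [harm]

theorem harm_succ (m : ℕ) : harm (m + 1) = harm m + 1 / (m + 1) := by
  simp [harm, sum_range_succ]

-- Also true at `m = 0`, where `1 / 0 = 0`: this lets the boundary case `s = k` below use the
-- generic formula.
theorem harm_sub_one (m : ℕ) : harm (m - 1) = harm m - 1 / m := by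
  rcases m with _ | m
  · simp [harm_zero]
  · simp [harm_succ]

section CharZeroField

variable {K : Type*} [Field K] [CharZero K]

theorem cast_choose_succ_left {n s : ℕ} (hs : s ≤ n) :
    ((n + 1).choose s : K) = n.choose s * (n + 1) / (n + 1 - s) := by
  have hsub : ((n + 1 - s : ℕ) : K) = n + 1 - s := by
    push_cast [Nat.cast_sub (by omega : s ≤ n + 1)]; rfl
  have hne : (n : K) + 1 - s ≠ 0 := hsub ▸ Nat.cast_ne_zero.2 (by omega)
  have h := congrArg (Nat.cast : ℕ → K) (Nat.choose_mul_succ_eq n s)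
  push_cast [hsub] at h
  rw [eq_div_iff hne, h]

theorem natCast_mul_cast_choose_sub_one {n s : ℕ} (hs : s ≤ n) :
    (n : K) * ((n - 1).choose s : K) = n.choose s * (n - s) := by
  rcases n with _ | m
  · obtain rfl : s = 0 := by omega
    simp
  · have h := congrArg (Nat.cast : ℕ → K) (Nat.choose_mul_succ_eq m s)
    push_cast [Nat.cast_sub hs] at h
    rw [Nat.add_sub_cancel, mul_comm]
    push_cast
    exact h

theorem cast_choose_succ_right {n s : ℕ} (hs : s ≤ n) :
    (n.choose (s + 1) : K) = n.choose s * (n - s) / (s + 1) := by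
  have h := congrArg (Nat.cast : ℕ → K) (Nat.choose_succ_right_eq n s)
  push_cast [Nat.cast_sub hs] at h
  rw [eq_div_iff (Nat.cast_add_one_ne_zero s), h]

theorem mul_pow_div_factorial (x : K) (k : ℕ) :
    x * (x ^ k / k !) = (k + 1) * (x ^ (k + 1) / (k + 1)!) := by
  rw [Nat.factorial_succ, Nat.cast_mul, pow_succ]
  field_simp
  push_cast
  ring

end CharZeroField

noncomputable def psiWeight (n k s : ℕ) : ℝ := harm (n - s) + harm (k - s) - 2 * harm s

noncomputable def psiSummand (n k s : ℕ) : ℝ := k.choose s * n.choose s * psiWeight n k s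

noncomputable def psiCoeff (n k : ℕ) : ℝ := ∑ s ∈ range (k + 1), psiSummand n k s

-- The certificate `G` of the header.
noncomputable def psiCert (n k s : ℕ) : ℝ :=
  -(k.choose s * n.choose s) *
    (s ^ 2 * psiWeight n k s / (n + 1 - s) + s * (2 * n + 2 - s) / (n + 1 - s) ^ 2)

theorem psiWeight_comm (n k s : ℕ) : psiWeight n k s = psiWeight k n s := by
  unfold psiWeight; ring

theorem psiWeight_succ_left {n k s : ℕ} (hs : s ≤ n) :
    psiWeight (n + 1) k s = psiWeight n k s + 1 / (n + 1 - s) := by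
  rw [psiWeight, psiWeight, Nat.sub_add_comm hs, harm_succ, Nat.cast_sub hs]
  ring

theorem psiWeight_sub_one_left {n k s : ℕ} (hs : s ≤ n) :
    psiWeight (n - 1) k s = psiWeight n k s - 1 / (n - s) := by
  rw [psiWeight, psiWeight, Nat.sub_right_comm, harm_sub_one, Nat.cast_sub hs]
  ring

theorem psiWeight_succ {n k s : ℕ} (hn : s ≤ n) (hk : s ≤ k) :
    psiWeight n k (s + 1) = psiWeight n k s - 1 / (n - s) - 1 / (k - s) - 2 / (s + 1) := by
  rw [psiWeight, psiWeight, ← Nat.sub_sub, ← Nat.sub_sub, harm_sub_one, harm_sub_one, harm_succ,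
    Nat.cast_sub hn, Nat.cast_sub hk]
  ring

theorem psiSummand_comm (n k s : ℕ) : psiSummand n k s = psiSummand k n s := by
  rw [psiSummand, psiSummand, psiWeight_comm]; ring

theorem psiSummand_succ_left {n k s : ℕ} (hs : s ≤ n) :
    psiSummand (n + 1) k s =
      k.choose s * (n.choose s * (n + 1) / (n + 1 - s)) * (psiWeight n k s + 1 / (n + 1 - s)) := by
  rw [psiSummand, psiWeight_succ_left hs, cast_choose_succ_left hs]

theorem natCast_mul_psiSummand_sub_one_left {n k s : ℕ} (hs : s ≤ n) :
    n * psiSummand (n - 1) k s =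
      k.choose s * (n.choose s * (n - s)) * (psiWeight n k s - 1 / (n - s)) := by
  rw [psiSummand, psiWeight_sub_one_left hs, ← natCast_mul_cast_choose_sub_one hs]
  ring

theorem psiSummand_step_of_lt {n k s : ℕ} (hsk : s ≤ k) (hsn : s < n) :
    (n + 1 : ℝ) * psiSummand (n + 1) k s - (2 * n + 1) * psiSummand n k s
        + n * psiSummand (n - 1) k s - k * psiSummand n (k - 1) s =
      psiCert n k (s + 1) - psiCert n k s := by
  have hsn' : (s : ℝ) < n := by exact_mod_cast hsn
  have hns : (n : ℝ) - s ≠ 0 := by linarith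
  have hns1 : (n : ℝ) + 1 - s ≠ 0 := by linarith
  have hs1 : (s : ℝ) + 1 ≠ 0 := by positivity
  rw [psiSummand_succ_left hsn.le, natCast_mul_psiSummand_sub_one_left hsn.le,
    psiSummand_comm n (k - 1), natCast_mul_psiSummand_sub_one_left hsk, psiWeight_comm k,
    psiCert, psiCert, psiWeight_succ hsn.le hsk, cast_choose_succ_right hsk,
    cast_choose_succ_right hsn.le, psiSummand]
  -- `k - s` vanishes when `s = k`, but `1 / (k - s)` enters both sides with the same coefficient.
  generalize 1 / ((k : ℝ) - s) = t
  push_cast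
  rw [add_sub_add_right_eq_sub]
  field_simp
  ring

theorem psiSummand_step_self (n : ℕ) :
    (n + 1 : ℝ) * psiSummand (n + 1) n n - (2 * n + 1) * psiSummand n n n
        + n * psiSummand (n - 1) n n - n * psiSummand n (n - 1) n =
      psiCert n n (n + 1) - psiCert n n n + 1 := by
  rw [psiSummand_succ_left le_rfl, natCast_mul_psiSummand_sub_one_left le_rfl,
    psiSummand_comm n (n - 1), natCast_mul_psiSummand_sub_one_left le_rfl, psiCert, psiCert,
    psiSummand]
  simp only [Nat.choose_self, Nat.choose_succ_self, sub_self, add_sub_cancel_left]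
  push_cast
  ring

theorem psiSummand_step {n k s : ℕ} (hsk : s ≤ k) (hkn : k ≤ n) :
    (n + 1 : ℝ) * psiSummand (n + 1) k s - (2 * n + 1) * psiSummand n k s
        + n * psiSummand (n - 1) k s - k * psiSummand n (k - 1) s =
      psiCert n k (s + 1) - psiCert n k s + if s = n then 1 else 0 := by
  rcases (hsk.trans hkn).lt_or_eq with hsn | rfl
  · rw [psiSummand_step_of_lt hsk hsn, if_neg hsn.ne, add_zero]
  · obtain rfl : k = s := le_antisymm hkn hsk
    rw [if_pos rfl, psiSummand_step_self]

theorem psiCert_zero (n k : ℕ) : psiCert n k 0 = 0 := by simp [psiCert]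

theorem psiCert_succ_self (n k : ℕ) : psiCert n k (k + 1) = 0 := by
  simp [psiCert, Nat.choose_succ_self]

theorem psiCoeff_eq_sum_range {n k m : ℕ} (h : k < m) :
    psiCoeff n k = ∑ s ∈ range m, psiSummand n k s :=
  sum_subset (range_subset_range.2 h) fun s _ hs => by
    simp [psiSummand, Nat.choose_eq_zero_of_lt (show k < s by simpa using hs)]

theorem psiCoeff_comm (n k : ℕ) : psiCoeff n k = psiCoeff k n := by
  rw [psiCoeff_eq_sum_range (m := max n k + 1) (by omega),
    psiCoeff_eq_sum_range (m := max n k + 1) (by omega)]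
  simp_rw [psiSummand_comm n k]

-- `s ↦ n - s` reverses the sign of `psiWeight n n s`.
theorem psiCoeff_self (n : ℕ) : psiCoeff n n = 0 := by
  have h : psiCoeff n n = -psiCoeff n n := by
    nth_rw 1 [psiCoeff, ← sum_range_reflect]
    rw [psiCoeff, ← sum_neg_distrib]
    refine sum_congr rfl fun s hs => ?_
    have hs : s ≤ n := mem_range_succ_iff.1 hs
    rw [psiSummand, psiSummand, psiWeight, psiWeight, Nat.add_sub_cancel, Nat.choose_symm hs,
      Nat.sub_sub_self hs]
    ring
  linarith

theorem natCast_mul_psiCoeff_sub_one (n k : ℕ) :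
    k * psiCoeff n (k - 1) = ∑ s ∈ range (k + 1), k * psiSummand n (k - 1) s := by
  rcases k with _ | k
  · simp
  · rw [psiCoeff_eq_sum_range (by omega : k + 1 - 1 < k + 1 + 1), mul_sum]

theorem psiCoeff_step {n k : ℕ} (hkn : k ≤ n) :
    (n + 1 : ℝ) * psiCoeff (n + 1) k - (2 * n + 1) * psiCoeff n k
        + n * psiCoeff (n - 1) k - k * psiCoeff n (k - 1) =
      if k = n then 1 else 0 := by
  rw [natCast_mul_psiCoeff_sub_one, psiCoeff, psiCoeff, psiCoeff, mul_sum, mul_sum, mul_sum,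
    ← sum_sub_distrib, ← sum_add_distrib, ← sum_sub_distrib,
    sum_congr rfl fun s hs => psiSummand_step (mem_range_succ_iff.1 hs) hkn, sum_add_distrib,
    sum_range_sub, psiCert_succ_self, psiCert_zero, sum_ite_eq' (range (k + 1)) n]
  simp only [mem_range_succ_iff, sub_zero, zero_add]
  exact if_congr ⟨fun h => le_antisymm hkn h, fun h => h.ge⟩ rfl rfl

theorem succ_mul_psiCoeff_succ_self (m : ℕ) : (m + 1 : ℝ) * psiCoeff (m + 1) m = 1 := by
  have h := psiCoeff_step (le_refl m)
  rw [if_pos rfl, psiCoeff_self, psiCoeff_comm (m - 1)] at h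
  linarith

theorem Psi_eq_sum (κ : ℂ) (n : ℕ) :
    Psi κ n = ∑ k ∈ range (n + 1), (-κ) ^ k / k ! * (psiCoeff n k : ℂ) := by
  simp only [Psi, psiCoeff, psiSummand, psiWeight]
  push_cast
  rfl

theorem Psi_succ_eq_sum (κ : ℂ) (n : ℕ) :
    Psi κ (n + 1) = ∑ k ∈ range (n + 1), (-κ) ^ k / k ! * (psiCoeff (n + 1) k : ℂ) := by
  rw [Psi_eq_sum, sum_range_succ _ (n + 1), psiCoeff_self]
  simp

theorem natCast_mul_Psi_sub_one (κ : ℂ) {n : ℕ} (hn : n ≠ 0) :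
    n * Psi κ (n - 1) =
      ∑ k ∈ range (n + 1), (-κ) ^ k / k ! * (n * psiCoeff (n - 1) k : ℂ)
        - (-κ) ^ n / n ! := by
  obtain ⟨m, rfl⟩ := Nat.exists_eq_add_one_of_ne_zero hn
  have h : ((m + 1 : ℕ) : ℂ) * psiCoeff m (m + 1) = 1 := by
    rw [psiCoeff_comm]; exact_mod_cast succ_mul_psiCoeff_succ_self m
  rw [Nat.add_sub_cancel, Psi_eq_sum, sum_range_succ _ (m + 1), h, mul_one, add_sub_cancel_right,
    mul_sum]
  exact sum_congr rfl fun k _ => by ring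

theorem mul_Psi_eq_sum (κ : ℂ) (n : ℕ) :
    κ * Psi κ n = -∑ k ∈ range (n + 1), (-κ) ^ k / k ! * (k * psiCoeff n (k - 1) : ℂ) := by
  have h := sum_range_succ' (fun k => (-κ) ^ k / k ! * (k * psiCoeff n (k - 1) : ℂ)) (n + 1)
  rw [sum_range_succ, Nat.add_sub_cancel, psiCoeff_self] at h
  simp only [Nat.cast_zero, zero_mul, mul_zero, add_zero, Complex.ofReal_zero] at h
  rw [h, Psi_eq_sum, mul_sum, ← sum_neg_distrib]
  refine sum_congr rfl fun k _ => ?_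
  have := mul_pow_div_factorial (-κ) k
  push_cast
  linear_combination -(psiCoeff n k : ℂ) * this

theorem sum_psiCoeff_step (κ : ℂ) (n : ℕ) :
    (n + 1 : ℂ) * ∑ k ∈ range (n + 1), (-κ) ^ k / k ! * (psiCoeff (n + 1) k : ℂ)
        - (2 * n + 1) * ∑ k ∈ range (n + 1), (-κ) ^ k / k ! * (psiCoeff n k : ℂ)
        + ∑ k ∈ range (n + 1), (-κ) ^ k / k ! * (n * psiCoeff (n - 1) k : ℂ)
        - ∑ k ∈ range (n + 1), (-κ) ^ k / k ! * (k * psiCoeff n (k - 1) : ℂ) =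
      (-κ) ^ n / n ! := by
  have hstep (k : ℕ) (hk : k ∈ range (n + 1)) :
      (-κ) ^ k / k ! * ((n + 1 : ℂ) * psiCoeff (n + 1) k - (2 * n + 1) * psiCoeff n k
        + n * psiCoeff (n - 1) k - k * psiCoeff n (k - 1)) =
      if k = n then (-κ) ^ k / k ! else 0 := by
    have h := congrArg Complex.ofReal (psiCoeff_step (mem_range_succ_iff.1 hk))
    push_cast [apply_ite Complex.ofReal] at h
    rw [h, mul_ite, mul_one, mul_zero]
  calc _ = ∑ k ∈ range (n + 1), (-κ) ^ k / k ! * ((n + 1 : ℂ) * psiCoeff (n + 1) k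
          - (2 * n + 1) * psiCoeff n k + n * psiCoeff (n - 1) k - k * psiCoeff n (k - 1)) := by
        rw [mul_sum, mul_sum, ← sum_sub_distrib, ← sum_add_distrib, ← sum_sub_distrib]
        exact sum_congr rfl fun k _ => by ring
    _ = ∑ k ∈ range (n + 1), if k = n then (-κ) ^ k / k ! else 0 := sum_congr rfl hstep
    _ = (-κ) ^ n / n ! := by rw [sum_ite_eq', if_pos (self_mem_range_succ n)]

/-- `Ψ_κ` solves `-(n+1)(Ψ(n+1) - Ψ(n)) + n(Ψ(n) - Ψ(n-1)) = κ Ψ(n)` for `n ≥ 1`,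
with `Ψ_κ(0) = 0` and `Ψ_κ(1) = 1`. -/
theorem Psi_recurrence (κ : ℂ) :
    (∀ n : ℕ, 1 ≤ n →
      -((n : ℂ) + 1) * (Psi κ (n + 1) - Psi κ n) + n * (Psi κ n - Psi κ (n - 1))
        = κ * Psi κ n) ∧
    Psi κ 0 = 0 ∧ Psi κ 1 = 1 := by
  refine ⟨fun n hn => ?_, by simp [Psi_eq_sum, psiCoeff_self], ?_⟩
  · linear_combination
      -(n + 1 : ℂ) * Psi_succ_eq_sum κ n + (2 * n + 1 : ℂ) * Psi_eq_sum κ n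
        - natCast_mul_Psi_sub_one κ (by omega : n ≠ 0) - mul_Psi_eq_sum κ n
        - sum_psiCoeff_step κ n
  · simpa [Psi_eq_sum, sum_range_succ, psiCoeff_self] using succ_mul_psiCoeff_succ_self 0
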